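/- Let ι : C → C̃ be an injective coalgebra morphism satisfying Δ_{C̃}(C̃) ⊆ C̃ ⊗ ι(C) + ι(C) ⊗ C̃, let λ be a normalized linear retraction of ι (ε_C ∘ λ = ε_{C̃}), p : C̃ → X := coker(ι) the projection, and ω : X → C ⊗ C the unique linear map with ω ∘ p = (λ ⊗ λ) ∘ Δ_{C̃} − Δ_C ∘ λ. Then ω is a normalized 2-cocycle: (C⊗ω)∘ρ_l − (Δ_C⊗C)∘ω + (C⊗Δ_C)∘ω − (ω⊗C)∘ρ_r = 0, where ρ_r and ρ_l are the induced right and left C-coactions on X. -/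

import Mathlib

/-!
Precomposed with the surjection `p`, the map `ω` becomes the coboundary
`δλ = (λ ⊗ λ) ∘ Δ - Δ ∘ λ` of the linear map `λ`, and the coactions become `(λ ⊗ p) ∘ Δ` and
`(p ⊗ λ) ∘ Δ`. The cocycle identity for `ω` is then the identity `δ(δλ) = 0`, in which the four
terms cancel in pairs once the cubic terms `(λ ⊗ λ ⊗ λ) ∘ Δ²` are identified by coassociativity
of `Δ_{C̃}` and the terms `Δ² ∘ λ` by coassociativity of `Δ_C`. Normalization is the counit axiom
together with `ε ∘ λ = ε`.
-/

open TensorProduct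

theorem TensorProduct.map_sub_left {R M N P Q : Type*} [CommRing R]
    [AddCommMonoid M] [AddCommMonoid N] [AddCommGroup P] [AddCommGroup Q]
    [Module R M] [Module R N] [Module R P] [Module R Q]
    (f g : M →ₗ[R] P) (h : N →ₗ[R] Q) : map (f - g) h = map f h - map g h :=
  ext' fun _ _ ↦ by simp [sub_tmul]

theorem TensorProduct.map_sub_right {R M N P Q : Type*} [CommRing R]
    [AddCommMonoid M] [AddCommMonoid N] [AddCommGroup P] [AddCommGroup Q]
    [Module R M] [Module R N] [Module R P] [Module R Q]
    (f : M →ₗ[R] P) (g h : N →ₗ[R] Q) : map f (g - h) = map f g - map f h :=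
  ext' fun _ _ ↦ by simp [tmul_sub]

open CoalgebraStruct (comul counit)

namespace LinearMap

variable {R A B : Type*} [CommRing R] [AddCommMonoid A] [Module R A] [Coalgebra R A]
  [AddCommGroup B] [Module R B] [Coalgebra R B]

def comulDefect (f : A →ₗ[R] B) : A →ₗ[R] B ⊗[R] B :=
  map f f ∘ₗ comul - comul ∘ₗ f

theorem comulDefect_cocycle (f : A →ₗ[R] B) :
    map f (comulDefect f) ∘ₗ comul
      - (TensorProduct.assoc R B B B).toLinearMap ∘ₗ rTensor B comul ∘ₗ comulDefect f
      + lTensor B comul ∘ₗ comulDefect f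
      - (TensorProduct.assoc R B B B).toLinearMap ∘ₗ map (comulDefect f) f ∘ₗ comul = 0 := by
  have hcubic : (TensorProduct.assoc R B B B).toLinearMap ∘ₗ map (map f f ∘ₗ comul) f ∘ₗ comul
      = map f (map f f ∘ₗ comul) ∘ₗ comul := by
    rw [← map_comp_rTensor]
    simp only [← comp_assoc]
    rw [← map_map_comp_assoc_eq]
    simp only [comp_assoc]
    rw [Coalgebra.coassoc, ← comp_assoc, map_comp_lTensor]
  have hleft : map f (comul ∘ₗ f) = lTensor B comul ∘ₗ map f f := by rw [lTensor_comp_map]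
  have hright : rTensor B comul ∘ₗ map f f ∘ₗ comul = map (comul ∘ₗ f) f ∘ₗ comul := by
    rw [← comp_assoc, rTensor_comp_map]
  have hcoassoc : (TensorProduct.assoc R B B B).toLinearMap ∘ₗ rTensor B comul ∘ₗ comul ∘ₗ f
      = lTensor B comul ∘ₗ comul ∘ₗ f :=
    congrArg (· ∘ₗ f) Coalgebra.coassoc
  simp only [comulDefect, map_sub_left, map_sub_right, comp_sub, sub_comp, hcubic, hleft, hright,
    hcoassoc]
  simp only [comp_assoc]
  abel

theorem lid_comp_rTensor_counit_comp_comulDefect {f : A →ₗ[R] B} (hf : counit ∘ₗ f = counit) :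
    (TensorProduct.lid R B).toLinearMap ∘ₗ rTensor B counit ∘ₗ comulDefect f = 0 := by
  have h : rTensor B counit ∘ₗ map f f = lTensor R f ∘ₗ rTensor A counit := by
    rw [rTensor_comp_map, hf, lTensor_comp_rTensor]
  ext a
  have ha := DFunLike.congr_fun h (comul a)
  simp only [comp_apply] at ha
  simp only [comulDefect, comp_apply, sub_apply, map_sub, ha,
    Coalgebra.rTensor_counit_comul, lTensor_tmul, sub_self, map_zero, zero_apply]

theorem rid_comp_lTensor_counit_comp_comulDefect {f : A →ₗ[R] B} (hf : counit ∘ₗ f = counit) :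
    (TensorProduct.rid R B).toLinearMap ∘ₗ lTensor B counit ∘ₗ comulDefect f = 0 := by
  have h : lTensor B counit ∘ₗ map f f = rTensor R f ∘ₗ lTensor A counit := by
    rw [lTensor_comp_map, hf, rTensor_comp_lTensor]
  ext a
  have ha := DFunLike.congr_fun h (comul a)
  simp only [comp_apply] at ha
  simp only [comulDefect, comp_apply, sub_apply, map_sub, ha,
    Coalgebra.lTensor_counit_comul, rTensor_tmul, sub_self, map_zero, zero_apply]

end LinearMap

theorem extension_two_cocycle {k : Type*} [Field k] {C Ct : Type*}
    [AddCommGroup C] [Module k C] [Coalgebra k C]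
    [AddCommGroup Ct] [Module k Ct] [Coalgebra k Ct]
    (ι : C →ₗc[k] Ct)
    (lam : Ct →ₗ[k] C)
    (hnorm : (Coalgebra.counit : C →ₗ[k] k) ∘ₗ lam = (Coalgebra.counit : Ct →ₗ[k] k))
    (ρr : (Ct ⧸ LinearMap.range ι.toLinearMap) →ₗ[k]
      (Ct ⧸ LinearMap.range ι.toLinearMap) ⊗[k] C)
    (hρr : ρr ∘ₗ (LinearMap.range ι.toLinearMap).mkQ =
      TensorProduct.map (LinearMap.range ι.toLinearMap).mkQ lam ∘ₗ Coalgebra.comul)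
    (ρl : (Ct ⧸ LinearMap.range ι.toLinearMap) →ₗ[k]
      C ⊗[k] (Ct ⧸ LinearMap.range ι.toLinearMap))
    (hρl : ρl ∘ₗ (LinearMap.range ι.toLinearMap).mkQ =
      TensorProduct.map lam (LinearMap.range ι.toLinearMap).mkQ ∘ₗ Coalgebra.comul)
    (ω : (Ct ⧸ LinearMap.range ι.toLinearMap) →ₗ[k] C ⊗[k] C)
    (hω : ω ∘ₗ (LinearMap.range ι.toLinearMap).mkQ =
      TensorProduct.map lam lam ∘ₗ Coalgebra.comul -
        (Coalgebra.comul : C →ₗ[k] C ⊗[k] C) ∘ₗ lam) :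
    -- the 2-cocycle condition
    (LinearMap.lTensor C ω) ∘ₗ ρl
      - (TensorProduct.assoc k C C C).toLinearMap ∘ₗ
          (LinearMap.rTensor C (Coalgebra.comul : C →ₗ[k] C ⊗[k] C)) ∘ₗ ω
      + (LinearMap.lTensor C (Coalgebra.comul : C →ₗ[k] C ⊗[k] C)) ∘ₗ ω
      - (TensorProduct.assoc k C C C).toLinearMap ∘ₗ (LinearMap.rTensor C ω) ∘ₗ ρr = 0 ∧
    -- normalization
    (TensorProduct.lid k C).toLinearMap ∘ₗ
      (LinearMap.rTensor C (Coalgebra.counit : C →ₗ[k] k)) ∘ₗ ω = 0 ∧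
    (TensorProduct.rid k C).toLinearMap ∘ₗ
      (LinearMap.lTensor C (Coalgebra.counit : C →ₗ[k] k)) ∘ₗ ω = 0 := by
  replace hω : ω ∘ₗ (LinearMap.range ι.toLinearMap).mkQ = lam.comulDefect := hω
  have hρl' : LinearMap.lTensor C ω ∘ₗ ρl ∘ₗ (LinearMap.range ι.toLinearMap).mkQ =
      map lam lam.comulDefect ∘ₗ comul := by
    rw [hρl, ← LinearMap.comp_assoc, LinearMap.lTensor_comp_map, hω]
  have hρr' : LinearMap.rTensor C ω ∘ₗ ρr ∘ₗ (LinearMap.range ι.toLinearMap).mkQ =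
      map lam.comulDefect lam ∘ₗ comul := by
    rw [hρr, ← LinearMap.comp_assoc, LinearMap.rTensor_comp_map, hω]
  refine ⟨?_, ?_, ?_⟩ <;> apply Submodule.linearMap_qext <;>
    simp only [LinearMap.sub_comp, LinearMap.add_comp, LinearMap.comp_assoc, hρl', hρr', hω,
      LinearMap.zero_comp]
  · exact lam.comulDefect_cocycle
  · exact lam.lid_comp_rTensor_counit_comp_comulDefect hnorm
  · exact lam.rid_comp_lTensor_counit_comp_comulDefect hnorm
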